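/- MS implies CP: for any conditional model and finite Γ, if w ∈ ⟦[φ,Γ]ψ⟧_MS then w ∈ ⟦[φ,Γ]ψ⟧_CP. -/

import Mathlib

open Set

/-- Minimal elements of `S` within domain `D` w.r.t. the strict part of `r`. -/
def minElemsOn {W : Type*} (r : W → W → Prop) (D S : Set W) : Set W :=
  {v | v ∈ S ∩ D ∧ ∀ u ∈ S ∩ D, ¬ (r u v ∧ ¬ r v u)}

/-- The set of formulas in `Γ` on whose truth `u` agrees with `w`. -/
def agreeSet {W F : Type*} (sat : W → F → Prop) (Γ : Set F) (w u : W) : Set F :=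
  {γ ∈ Γ | (sat u γ ↔ sat w γ)}

/-- `[w]_Γ`: worlds of `Ww` agreeing with `w` on every formula of `Γ`. -/
def cpCls {W F : Type*} (sat : W → F → Prop) (Γ : Set F) (Ww : Set W) (w : W) : Set W :=
  {u ∈ Ww | ∀ γ ∈ Γ, (sat u γ ↔ sat w γ)}

/-- `⊴_w^Γ`: the restriction of `pre` to `[w]_Γ`. -/
def cpRel {W F : Type*} (sat : W → F → Prop) (Γ : Set F) (Ww : Set W)
    (pre : W → W → Prop) (w : W) (u v : W) : Prop :=
  u ∈ cpCls sat Γ Ww w ∧ v ∈ cpCls sat Γ Ww w ∧ pre u v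

/-- The restriction of a relation `pre` to a subset `A`. -/
def restrictRel {W : Type*} (A : Set W) (pre : W → W → Prop) (u v : W) : Prop :=
  u ∈ A ∧ v ∈ A ∧ pre u v

/-- `⪯_w^Γ`: the naive-counting relation. -/
def ncRel {W F : Type*} (sat : W → F → Prop) (Γ : Finset F)
    (pre : W → W → Prop) (w : W) (u v : W) : Prop :=
  (agreeSet sat (↑Γ) w u).ncard > (agreeSet sat (↑Γ) w v).ncard ∨
    ((agreeSet sat (↑Γ) w u).ncard = (agreeSet sat (↑Γ) w v).ncard ∧ pre u v)

/-- `⊑_w^Γ`: the maximal-superset relation. -/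
def msRel {W F : Type*} (sat : W → F → Prop) (Γ : Set F)
    (pre : W → W → Prop) (w : W) (u v : W) : Prop :=
  agreeSet sat Γ w v ⊂ agreeSet sat Γ w u ∨
    (agreeSet sat Γ w v = agreeSet sat Γ w u ∧ pre u v)

/-!
A world of `[w]_Γ` agrees with `w` on all of `Γ`, the largest possible agreement set. So any world
strictly `⊑_w^Γ`-below it has the same agreement set, hence lies in `[w]_Γ` as well, and is strictly
`pre`-below it, i.e. strictly `⊴_w^Γ`-below it. Thus `⊴_w^Γ`-minimality implies `⊑_w^Γ`-minimality.
-/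

theorem mem_minElemsOn_of_strict_descent {W : Type*} {r r' : W → W → Prop} {D D' S : Set W}
    {v : W} (hv : v ∈ minElemsOn r' D' S) (hvD : v ∈ D)
    (hdesc : ∀ u ∈ S ∩ D, r u v → ¬ r v u → u ∈ D' ∧ r' u v ∧ ¬ r' v u) :
    v ∈ minElemsOn r D S := by
  refine ⟨⟨hv.1.1, hvD⟩, fun u hu ⟨huv, hvu⟩ => ?_⟩
  obtain ⟨huD', huv', hvu'⟩ := hdesc u hu huv hvu
  exact hv.2 u ⟨hu.1, huD'⟩ ⟨huv', hvu'⟩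

section Agreement

variable {W F : Type*} {sat : W → F → Prop} {Γ : Set F} {w u v : W}

theorem agreeSet_subset : agreeSet sat Γ w u ⊆ Γ := fun _ hγ => hγ.1

theorem agreeSet_eq_self_iff : agreeSet sat Γ w u = Γ ↔ ∀ γ ∈ Γ, (sat u γ ↔ sat w γ) := by
  simp only [agreeSet, Set.sep_eq_self_iff_mem_true]

theorem mem_cpCls_iff {Ww : Set W} :
    u ∈ cpCls sat Γ Ww w ↔ u ∈ Ww ∧ agreeSet sat Γ w u = Γ := by
  rw [agreeSet_eq_self_iff]
  rfl

theorem msRel_of_agreeSet_eq_self {pre : W → W → Prop} (hv : agreeSet sat Γ w v = Γ)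
    (huv : msRel sat Γ pre w u v) : agreeSet sat Γ w u = Γ ∧ pre u v := by
  rcases huv with hlt | ⟨heq, hpre⟩
  · exact absurd hv (ne_of_ssubset (hlt.trans_subset agreeSet_subset))
  · exact ⟨heq ▸ hv, hpre⟩

end Agreement

theorem ms_implies_cp {W F : Type*} (sat : W → F → Prop) (Γ : Finset F)
    (Ww : Set W) (pre : W → W → Prop) (w : W) (P Q : Set W)
    (h : minElemsOn (msRel sat (↑Γ) pre w) Ww P ⊆ Q) :
    minElemsOn (cpRel sat (↑Γ) Ww pre w) (cpCls sat (↑Γ) Ww w) P ⊆ Q := by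
  intro v hv
  have hvCls := hv.1.2
  obtain ⟨hvW, hvFull⟩ := mem_cpCls_iff.mp hvCls
  refine h (mem_minElemsOn_of_strict_descent hv hvW fun u hu huv hvu => ?_)
  obtain ⟨huFull, hpre⟩ := msRel_of_agreeSet_eq_self hvFull huv
  have huCls : u ∈ cpCls sat (↑Γ) Ww w := mem_cpCls_iff.mpr ⟨hu.2, huFull⟩
  have hnot_pre : ¬ pre v u := fun h' => hvu (Or.inr ⟨huFull.trans hvFull.symm, h'⟩)
  exact ⟨huCls, ⟨huCls, hvCls, hpre⟩, fun h' => hnot_pre h'.2.2⟩
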